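/- Under Ψ, the hyperbolic one-parameter subgroup t ↦ diag(eᵗ, e⁻ᵗ) of SL(2,ℝ) maps to [sinh t : 0 : 0 : cosh t - 1 : cosh t + 1], which in the affine Minkowski chart corresponds to the segment of the x-axis with x = tanh(t/2), and t ↦ -diag(eᵗ,e⁻ᵗ) maps to [sinh t : 0 : 0 : cosh t + 1 : cosh t - 1], corresponding to x = coth(t/2); in particular tanh(t/2)·coth(t/2) = 1 and the two images are swapped by the involution [X:Y:Z:U:V] ↦ [X:Y:Z:V:U]. -/

import Mathlib

/-!
`Ψ(-M) = -I_S(Ψ M)`, since negating `M` negates the trace and so exchanges `tr - 2` with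
`-(tr + 2)`; this gives the swap between the two curves. On the diagonal,
`e^t - e^{-t} = 2 sinh t` and `e^t + e^{-t} = 2 cosh t`. By the half-angle identities
`sinh t = 2 sinh(t/2) cosh(t/2)` and `cosh t ∓ 1 = 2 sinh²(t/2), 2 cosh²(t/2)`, dividing by
`2 cosh²(t/2)`, resp. `2 sinh²(t/2)`, puts the image in the Minkowski chart at `x = tanh(t/2)`,
resp. `x = coth(t/2)`.
-/

open Matrix Real

/-- The map `Ψ` in homogeneous coordinates:
`[[a,b],[c,d]] ↦ (a-d, b+c, b-c, a+d-2, a+d+2)`. -/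
def psiVec (M : Matrix (Fin 2) (Fin 2) ℝ) : Fin 5 → ℝ :=
  ![M 0 0 - M 1 1, M 0 1 + M 1 0, M 0 1 - M 1 0, M 0 0 + M 1 1 - 2, M 0 0 + M 1 1 + 2]

/-- The involution `I_S : [X:Y:Z:U:V] ↦ [X:Y:Z:V:U]` on homogeneous coordinates. -/
def swapUV (v : Fin 5 → ℝ) : Fin 5 → ℝ := ![v 0, v 1, v 2, v 4, v 3]

def minkowskiChart (x y z : ℝ) : Fin 5 → ℝ := ![x, y, z, x ^ 2 + y ^ 2 - z ^ 2, 1]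

lemma psiVec_neg (M : Matrix (Fin 2) (Fin 2) ℝ) : psiVec (-M) = -swapUV (psiVec M) := by
  ext i; fin_cases i <;> simp [psiVec, swapUV] <;> ring

lemma psiVec_diagonal (a d : ℝ) :
    psiVec !![a, 0; 0, d] = ![a - d, 0, 0, a + d - 2, a + d + 2] := by
  ext i; fin_cases i <;> simp [psiVec]

lemma psiVec_hyperbolic (t : ℝ) :
    psiVec !![exp t, 0; 0, exp (-t)] = (2 : ℝ) • ![sinh t, 0, 0, cosh t - 1, cosh t + 1] := by
  rw [psiVec_diagonal, sinh_eq, cosh_eq]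
  ext i; fin_cases i <;> simp <;> ring

lemma psiVec_neg_hyperbolic (t : ℝ) :
    psiVec (-!![exp t, 0; 0, exp (-t)]) =
      (-2 : ℝ) • ![sinh t, 0, 0, cosh t + 1, cosh t - 1] := by
  rw [psiVec_neg, psiVec_hyperbolic]
  ext i; fin_cases i <;> simp [swapUV]

lemma sinh_eq_two_mul_sinh_half_mul_cosh_half (t : ℝ) :
    sinh t = 2 * sinh (t / 2) * cosh (t / 2) := by
  rw [← sinh_two_mul, mul_div_cancel₀ t two_ne_zero]

lemma cosh_sub_one_eq_two_mul_sinh_half_sq (t : ℝ) : cosh t - 1 = 2 * sinh (t / 2) ^ 2 := by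
  conv_lhs => rw [← mul_div_cancel₀ t two_ne_zero, cosh_two_mul, cosh_sq']
  ring

lemma cosh_add_one_eq_two_mul_cosh_half_sq (t : ℝ) : cosh t + 1 = 2 * cosh (t / 2) ^ 2 := by
  conv_lhs => rw [← mul_div_cancel₀ t two_ne_zero, cosh_two_mul, sinh_sq]
  ring

lemma hyperbolic_vec_eq_smul_minkowskiChart_tanh_half (t : ℝ) :
    ![sinh t, 0, 0, cosh t - 1, cosh t + 1] =
      (2 * cosh (t / 2) ^ 2) • minkowskiChart (tanh (t / 2)) 0 0 := by
  have hc : cosh (t / 2) ≠ 0 := (cosh_pos _).ne'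
  rw [sinh_eq_two_mul_sinh_half_mul_cosh_half, cosh_sub_one_eq_two_mul_sinh_half_sq,
    cosh_add_one_eq_two_mul_cosh_half_sq, tanh_eq_sinh_div_cosh]
  ext i; fin_cases i <;> simp [minkowskiChart] <;> field_simp

lemma hyperbolic_vec_eq_smul_minkowskiChart_coth_half {t : ℝ} (ht : t ≠ 0) :
    ![sinh t, 0, 0, cosh t + 1, cosh t - 1] =
      (2 * sinh (t / 2) ^ 2) • minkowskiChart (cosh (t / 2) / sinh (t / 2)) 0 0 := by
  have hs : sinh (t / 2) ≠ 0 := sinh_ne_zero.2 (div_ne_zero ht two_ne_zero)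
  rw [sinh_eq_two_mul_sinh_half_mul_cosh_half, cosh_sub_one_eq_two_mul_sinh_half_sq,
    cosh_add_one_eq_two_mul_cosh_half_sq]
  ext i; fin_cases i <;> simp [minkowskiChart] <;> field_simp

lemma tanh_mul_cosh_div_sinh {x : ℝ} (hx : x ≠ 0) : tanh x * (cosh x / sinh x) = 1 := by
  have hs : sinh x ≠ 0 := sinh_ne_zero.2 hx
  have hc : cosh x ≠ 0 := (cosh_pos x).ne'
  rw [tanh_eq_sinh_div_cosh]
  field_simp

/-- Under `Ψ`, `t ↦ diag(eᵗ, e⁻ᵗ)` maps to `[sinh t : 0 : 0 : cosh t - 1 : cosh t + 1]`,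
which in the affine Minkowski chart `(x,y,z) ↦ [x : y : z : x² + y² - z² : 1]` is the
`x`-axis segment `x = tanh(t/2)`; and `t ↦ -diag(eᵗ, e⁻ᵗ)` maps to
`[sinh t : 0 : 0 : cosh t + 1 : cosh t - 1]`, corresponding to `x = coth(t/2)`.
Moreover `tanh(t/2)·coth(t/2) = 1` and the two images are swapped by the involution
`[X:Y:Z:U:V] ↦ [X:Y:Z:V:U]`. -/
theorem psi_hyperbolic_subgroup (t : ℝ) :
    (∃ c : ℝ, c ≠ 0 ∧
      psiVec !![exp t, 0; 0, exp (-t)] = c • ![sinh t, 0, 0, cosh t - 1, cosh t + 1]) ∧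
    (∃ c : ℝ, c ≠ 0 ∧
      psiVec !![exp t, 0; 0, exp (-t)] =
        c • ![tanh (t / 2), 0, 0, tanh (t / 2) ^ 2 + 0 ^ 2 - 0 ^ 2, 1]) ∧
    (∃ c : ℝ, c ≠ 0 ∧
      psiVec (-!![exp t, 0; 0, exp (-t)]) =
        c • ![sinh t, 0, 0, cosh t + 1, cosh t - 1]) ∧
    (t ≠ 0 →
      tanh (t / 2) * (cosh (t / 2) / sinh (t / 2)) = 1 ∧
      ∃ c : ℝ, c ≠ 0 ∧
        psiVec (-!![exp t, 0; 0, exp (-t)]) =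
          c • ![cosh (t / 2) / sinh (t / 2), 0, 0,
                (cosh (t / 2) / sinh (t / 2)) ^ 2 + 0 ^ 2 - 0 ^ 2, 1]) ∧
    (∃ c : ℝ, c ≠ 0 ∧
      swapUV (psiVec !![exp t, 0; 0, exp (-t)]) =
        c • psiVec (-!![exp t, 0; 0, exp (-t)])) := by
  refine ⟨⟨2, two_ne_zero, psiVec_hyperbolic t⟩, ⟨2 * (2 * cosh (t / 2) ^ 2), by positivity, ?_⟩,
    ⟨-2, by norm_num, psiVec_neg_hyperbolic t⟩, fun ht => ?_, ⟨-1, by norm_num, ?_⟩⟩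
  · rw [psiVec_hyperbolic, hyperbolic_vec_eq_smul_minkowskiChart_tanh_half, smul_smul]
    rfl
  · refine ⟨tanh_mul_cosh_div_sinh (div_ne_zero ht two_ne_zero), -2 * (2 * sinh (t / 2) ^ 2),
      by positivity, ?_⟩
    rw [psiVec_neg_hyperbolic, hyperbolic_vec_eq_smul_minkowskiChart_coth_half ht, smul_smul]
    rfl
  · rw [psiVec_neg, neg_one_smul, neg_neg]
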